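/- Let Y_n be random variables of the form Y_n = [Var(X 1_{|X| ≤ b_n})]^{-1/2}(X 1_{|X| ≤ b_n} − E[X 1_{|X| ≤ b_n}]), where E X = 0, l(x) = E[|X|² 1_{|X| ≤ x}] is slowly varying, E|X|² = ∞, and b_n = inf{x ≥ b+1 : n l(x) ≤ x²}. Then for every η > 0, E[|Y_n|² 1_{|Y_n| > η √n}] → 0 as n → ∞. -/

import Mathlib

open MeasureTheory ProbabilityTheory Filter

/-! Slow variation of `l` gives `l (2 x) ≤ (3 / 2) l x` for large `x`, so the dyadic shells
`2 ^ k x₀ < |X| ≤ 2 ^ (k + 1) x₀` contribute a convergent geometric series to `E |X|`. Hence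
`X` is integrable and the truncated means `m n` tend to `E X = 0`. Since `b n / 2` lies below
the infimum defining `b n`, we get `b n ^ 2 < 4 n l (b n)`, and `v n ≥ l (b n) / 2` for large
`n`, so `η √(n v n) ≥ η b n / 3`. On the event `|Y n| > η √n` the truncated variable is
therefore nonzero and `|X|` lies in the shell `(c b n, b n]` with `c = min (η / 6) 1`; that
shell carries the second moment `l (b n) - l (c b n) = o(l (b n))` by slow variation. -/

noncomputable def truncate (c x : ℝ) : ℝ := if |x| ≤ c then x else 0

section Truncate

variable {c d x : ℝ}

theorem truncate_of_abs_le (h : |x| ≤ c) : truncate c x = x := if_pos h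

theorem truncate_of_lt_abs (h : c < |x|) : truncate c x = 0 := if_neg h.not_ge

@[fun_prop]
theorem measurable_truncate (c : ℝ) : Measurable (truncate c) :=
  Measurable.ite (measurableSet_le measurable_id.abs measurable_const) measurable_id
    measurable_const

theorem abs_truncate_le_abs : |truncate c x| ≤ |x| := by
  unfold truncate; split_ifs <;> simp

theorem abs_truncate_le : |truncate c x| ≤ |c| := by
  unfold truncate; split_ifs with h
  · exact h.trans (le_abs_self c)
  · simp

theorem sq_truncate_mono (hcd : c ≤ d) : truncate c x ^ 2 ≤ truncate d x ^ 2 := by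
  unfold truncate; split_ifs with h h'
  · rfl
  · exact absurd (h.trans hcd) h'
  · simp [sq_nonneg]
  · rfl

theorem sq_truncate_le_mul_abs (hc : 0 ≤ c) : truncate c x ^ 2 ≤ c * |x| := by
  unfold truncate; split_ifs with h
  · rw [← sq_abs, sq]; exact mul_le_mul_of_nonneg_right h (abs_nonneg x)
  · rw [zero_pow two_ne_zero]; positivity

theorem abs_truncate_le_add_sq_div (hc : 0 < c) :
    |truncate d x| ≤ |truncate c x| + truncate d x ^ 2 / c := by
  rcases le_or_gt |x| c with hxc | hcx
  · rw [truncate_of_abs_le hxc]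
    exact abs_truncate_le_abs.trans (le_add_of_nonneg_right (by positivity))
  · rw [truncate_of_lt_abs hcx, abs_zero (α := ℝ), zero_add, le_div_iff₀ hc, ← sq_abs, sq]
    unfold truncate; split_ifs
    · exact mul_le_mul_of_nonneg_left hcx.le (abs_nonneg x)
    · simp

end Truncate

def SlowlyVarying (f : ℝ → ℝ) : Prop :=
  ∀ c : ℝ, 0 < c → Tendsto (fun x => f (c * x) / f x) atTop (nhds 1)

namespace SlowlyVarying

variable {f : ℝ → ℝ}

theorem eventually_ne_zero (hf : SlowlyVarying f) : ∀ᶠ x in atTop, f x ≠ 0 :=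
  ((hf 1 one_pos).eventually (eventually_ne_nhds one_ne_zero)).mono fun _ hx h =>
    hx (by simp [h])

theorem eventually_le_mul (hf : SlowlyVarying f) (hf0 : ∀ x, 0 ≤ f x) {c r : ℝ} (hc : 0 < c)
    (hr : 1 < r) : ∀ᶠ x in atTop, f (c * x) ≤ r * f x := by
  filter_upwards [hf.eventually_ne_zero, (hf c hc).eventually (eventually_lt_nhds hr)]
    with x hx0 hx
  exact ((div_lt_iff₀ ((hf0 x).lt_of_ne' hx0)).mp hx).le

end SlowlyVarying

noncomputable def thresholdSeq (f : ℝ → ℝ) (a : ℝ) (n : ℕ) : ℝ :=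
  sInf {x | a ≤ x ∧ n * f x ≤ x ^ 2}

section Threshold

variable {f : ℝ → ℝ} {a : ℝ}

theorem sqrt_mul_le_thresholdSeq (hf : Monotone f) (ha : 0 ≤ a) {n : ℕ}
    (hne : {x | a ≤ x ∧ n * f x ≤ x ^ 2}.Nonempty) : √(n * f a) ≤ thresholdSeq f a n :=
  le_csInf hne fun _ ⟨hax, hx⟩ => (Real.sqrt_le_left (ha.trans hax)).mpr
    ((mul_le_mul_of_nonneg_left (hf hax) n.cast_nonneg).trans hx)

theorem tendsto_thresholdSeq_atTop (hf : Monotone f) (ha : 0 ≤ a) (hfa : 0 < f a)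
    (hne : ∀ n : ℕ, {x | a ≤ x ∧ n * f x ≤ x ^ 2}.Nonempty) :
    Tendsto (thresholdSeq f a) atTop atTop :=
  tendsto_atTop_mono (fun n => sqrt_mul_le_thresholdSeq hf ha (hne n))
    (Real.tendsto_sqrt_atTop.comp (tendsto_natCast_atTop_atTop.atTop_mul_const hfa))

theorem thresholdSeq_sq_lt (hf : Monotone f) (ha : 0 < a) {n : ℕ}
    (h : 2 * a ≤ thresholdSeq f a n) :
    thresholdSeq f a n ^ 2 < 4 * n * f (thresholdSeq f a n) := by
  set b := thresholdSeq f a n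
  have hhalf : b / 2 ∉ {x | a ≤ x ∧ n * f x ≤ x ^ 2} := fun hmem => by
    have : b ≤ b / 2 := csInf_le ⟨a, fun _ hx => hx.1⟩ hmem
    linarith
  have hlt : (b / 2) ^ 2 < n * f (b / 2) := lt_of_not_ge fun hle => hhalf ⟨by linarith, hle⟩
  have hmono : n * f (b / 2) ≤ n * f b :=
    mul_le_mul_of_nonneg_left (hf (by linarith)) n.cast_nonneg
  nlinarith

end Threshold

theorem le_pow_mul_of_forall_two_mul_le {f : ℝ → ℝ} {r x₀ : ℝ} (hr : 0 ≤ r)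
    (hx₀ : 0 ≤ x₀) (h : ∀ x, x₀ ≤ x → f (2 * x) ≤ r * f x) (k : ℕ) :
    f (2 ^ k * x₀) ≤ r ^ k * f x₀ := by
  induction k with
  | zero => simp
  | succ k ih =>
    calc f (2 ^ (k + 1) * x₀) = f (2 * (2 ^ k * x₀)) := by ring_nf
      _ ≤ r * f (2 ^ k * x₀) := h _ (le_mul_of_one_le_left hx₀ (one_le_pow₀ one_le_two))
      _ ≤ r * (r ^ k * f x₀) := mul_le_mul_of_nonneg_left ih hr
      _ = r ^ (k + 1) * f x₀ := by ring

noncomputable def truncatedSecondMoment (μ : Measure ℝ) (x : ℝ) : ℝ :=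
  ∫ y, truncate x y ^ 2 ∂μ

section Moments

variable {μ : Measure ℝ}

theorem truncatedSecondMoment_nonneg (x : ℝ) : 0 ≤ truncatedSecondMoment μ x :=
  integral_nonneg fun _ => sq_nonneg _

theorem tendsto_integral_truncate (hint : Integrable id μ) {b : ℕ → ℝ}
    (hb : Tendsto b atTop atTop) :
    Tendsto (fun n => ∫ y, truncate (b n) y ∂μ) atTop (nhds (∫ y, y ∂μ)) :=
  tendsto_integral_of_dominated_convergence (fun y => |y|)
    (fun n => (measurable_truncate (b n)).aestronglyMeasurable) hint.abs
    (fun _ => ae_of_all _ fun _ => abs_truncate_le_abs)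
    (ae_of_all _ fun y => tendsto_const_nhds.congr'
      ((hb.eventually_ge_atTop |y|).mono fun _ h => (truncate_of_abs_le h).symm))

variable [IsFiniteMeasure μ]

theorem integrable_truncate (c : ℝ) : Integrable (truncate c) μ :=
  .of_bound (measurable_truncate c).aestronglyMeasurable |c| (ae_of_all _ fun _ => abs_truncate_le)

theorem integrable_sq_truncate (c : ℝ) : Integrable (fun y => truncate c y ^ 2) μ :=
  .of_bound ((measurable_truncate c).pow_const 2).aestronglyMeasurable (c ^ 2)
    (ae_of_all _ fun _ => by
      rw [Real.norm_eq_abs, abs_pow, ← sq_abs c]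
      exact pow_le_pow_left₀ (abs_nonneg _) abs_truncate_le 2)

theorem truncatedSecondMoment_mono : Monotone (truncatedSecondMoment μ) := fun _ _ h =>
  integral_mono (integrable_sq_truncate _) (integrable_sq_truncate _) fun _ => sq_truncate_mono h

theorem truncatedSecondMoment_le_mul_integral_abs (hint : Integrable id μ) {x : ℝ}
    (hx : 0 ≤ x) : truncatedSecondMoment μ x ≤ x * ∫ y, |y| ∂μ := by
  rw [← integral_const_mul]
  exact integral_mono (integrable_sq_truncate x) (hint.abs.const_mul x)
    fun _ => sq_truncate_le_mul_abs hx

theorem integrable_id_of_integral_abs_truncate_le {c : ℕ → ℝ} (hc : Tendsto c atTop atTop)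
    {M : ℝ} (h : ∀ k, ∫ y, |truncate (c k) y| ∂μ ≤ M) : Integrable id μ := by
  refine integrable_of_tendsto (G := fun k => truncate (c k))
    (ae_of_all _ fun y => tendsto_const_nhds.congr'
      ((hc.eventually_ge_atTop |y|).mono fun _ h => (truncate_of_abs_le h).symm))
    (fun k => (measurable_truncate _).aestronglyMeasurable)
    (ne_top_of_le_ne_top (ENNReal.ofReal_ne_top (r := M))
      (liminf_le_of_frequently_le' (Frequently.of_forall fun k => ?_)))
  rw [← ofReal_integral_norm_eq_lintegral_enorm (integrable_truncate _)]
  exact ENNReal.ofReal_le_ofReal (h k)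

theorem integral_abs_truncate_two_pow_mul_le [IsProbabilityMeasure μ] {x₀ : ℝ}
    (hx₀ : 0 < x₀) (K : ℕ) :
    ∫ y, |truncate (2 ^ K * x₀) y| ∂μ ≤ x₀ +
      ∑ k ∈ Finset.range K, truncatedSecondMoment μ (2 ^ (k + 1) * x₀) / (2 ^ k * x₀) := by
  induction K with
  | zero =>
    simpa using integral_mono (integrable_truncate (μ := μ) _).abs (integrable_const x₀)
      fun _ => abs_truncate_le.trans_eq (abs_of_pos (by simpa using hx₀))
  | succ K ih =>
    rw [Finset.sum_range_succ, ← add_assoc]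
    calc ∫ y, |truncate (2 ^ (K + 1) * x₀) y| ∂μ
        ≤ ∫ y, (|truncate (2 ^ K * x₀) y|
            + truncate (2 ^ (K + 1) * x₀) y ^ 2 / (2 ^ K * x₀)) ∂μ :=
          integral_mono (integrable_truncate _).abs
            ((integrable_truncate _).abs.add ((integrable_sq_truncate _).div_const _))
            fun _ => abs_truncate_le_add_sq_div (by positivity)
      _ = ∫ y, |truncate (2 ^ K * x₀) y| ∂μ
            + truncatedSecondMoment μ (2 ^ (K + 1) * x₀) / (2 ^ K * x₀) := by
          rw [integral_add (integrable_truncate _).abs ((integrable_sq_truncate _).div_const _),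
            integral_div, truncatedSecondMoment]
      _ ≤ _ := by linarith

theorem thresholdSet_nonempty (hint : Integrable id μ) (a : ℝ) (n : ℕ) :
    {x | a ≤ x ∧ n * truncatedSecondMoment μ x ≤ x ^ 2}.Nonempty := by
  set x := max (max a 0) (n * ∫ y, |y| ∂μ)
  have hx0 : 0 ≤ x := (le_max_right a 0).trans (le_max_left _ _)
  refine ⟨x, (le_max_left a 0).trans (le_max_left _ _), ?_⟩
  calc n * truncatedSecondMoment μ x ≤ n * (x * ∫ y, |y| ∂μ) :=
        mul_le_mul_of_nonneg_left (truncatedSecondMoment_le_mul_integral_abs hint hx0)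
          n.cast_nonneg
    _ = x * (n * ∫ y, |y| ∂μ) := by ring
    _ ≤ x * x := mul_le_mul_of_nonneg_left (le_max_right _ _) hx0
    _ = x ^ 2 := (sq x).symm

theorem SlowlyVarying.truncatedSecondMoment_pos (hL : SlowlyVarying (truncatedSecondMoment μ))
    {x : ℝ} (hx : sInf {x | 0 < x ∧ 0 < truncatedSecondMoment μ x} < x) :
    0 < truncatedSecondMoment μ x := by
  have hne : {x | 0 < x ∧ 0 < truncatedSecondMoment μ x}.Nonempty := by
    obtain ⟨y, hy0, hy⟩ := ((eventually_gt_atTop 0).and hL.eventually_ne_zero).exists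
    exact ⟨y, hy0, (truncatedSecondMoment_nonneg y).lt_of_ne' hy⟩
  obtain ⟨y, ⟨-, hy⟩, hyx⟩ := exists_lt_of_csInf_lt hne hx
  exact hy.trans_le (truncatedSecondMoment_mono hyx.le)

end Moments

theorem truncatedSecondMoment_map {Ω : Type*} [MeasurableSpace Ω] {P : Measure Ω}
    {X : Ω → ℝ} (hX : AEMeasurable X P) (x : ℝ) :
    truncatedSecondMoment (P.map X) x = ∫ ω in {ω | |X ω| ≤ x}, |X ω| ^ 2 ∂P := by
  have hs : MeasurableSet {y : ℝ | |y| ≤ x} :=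
    measurableSet_le measurable_id.abs measurable_const
  calc truncatedSecondMoment (P.map X) x = ∫ y in {y | |y| ≤ x}, |y| ^ 2 ∂(P.map X) := by
        rw [← integral_indicator hs]
        refine integral_congr_ae (ae_of_all _ fun y => ?_)
        by_cases h : |y| ≤ x <;> simp [truncate, h]
    _ = _ := setIntegral_map hs (by fun_prop) hX

section Lindeberg

variable {μ : Measure ℝ} [IsProbabilityMeasure μ]

theorem integrable_id_of_truncatedSecondMoment_two_mul_le {r x₀ : ℝ} (hr0 : 0 ≤ r)
    (hr2 : r < 2) (hx₀ : 0 < x₀)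
    (h : ∀ x, x₀ ≤ x →
      truncatedSecondMoment μ (2 * x) ≤ r * truncatedSecondMoment μ x) :
    Integrable id μ := by
  set C := r * truncatedSecondMoment μ x₀ / x₀
  have hC : 0 ≤ C := by have := truncatedSecondMoment_nonneg (μ := μ) x₀; positivity
  have hshell : ∀ k : ℕ, truncatedSecondMoment μ (2 ^ (k + 1) * x₀) / (2 ^ k * x₀)
      ≤ C * (r / 2) ^ k := fun k => by
    rw [div_le_iff₀ (by positivity)]
    calc truncatedSecondMoment μ (2 ^ (k + 1) * x₀)
        ≤ r ^ (k + 1) * truncatedSecondMoment μ x₀ :=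
          le_pow_mul_of_forall_two_mul_le hr0 hx₀.le h _
      _ = C * (r / 2) ^ k * (2 ^ k * x₀) := by
        simp only [C, div_pow]; field_simp; ring
  refine integrable_id_of_integral_abs_truncate_le
    ((tendsto_pow_atTop_atTop_of_one_lt one_lt_two).atTop_mul_const hx₀)
    (M := x₀ + C * (1 - r / 2)⁻¹) fun K =>
      (integral_abs_truncate_two_pow_mul_le hx₀ K).trans ?_
  grw [Finset.sum_le_sum fun k _ => hshell k, ← Finset.mul_sum, Finset.range_eq_Ico,
    geom_sum_Ico_le_of_lt_one (by positivity) (by linarith), pow_zero, one_div]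

theorem integrable_id_of_slowlyVarying (hL : SlowlyVarying (truncatedSecondMoment μ)) :
    Integrable id μ := by
  obtain ⟨x₀, hx₀⟩ := ((hL.eventually_le_mul truncatedSecondMoment_nonneg two_pos
    (by norm_num : (1 : ℝ) < 3 / 2)).and (eventually_gt_atTop 0)).exists_forall_of_atTop
  exact integrable_id_of_truncatedSecondMoment_two_mul_le (by norm_num) (by norm_num)
    (hx₀ x₀ le_rfl).2 fun x hx => (hx₀ x hx).1

theorem setIntegral_sq_standardized_truncate_le {b c m s v : ℝ} (hb : 0 ≤ b) (hc0 : 0 ≤ c)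
    (hc1 : c ≤ 1) (hv : 0 < v) (hs : c * b + |m| ≤ s * √v) :
    ∫ y in {y | s < |(truncate b y - m) / √v|}, ((truncate b y - m) / √v) ^ 2 ∂μ
      ≤ (2 * (truncatedSecondMoment μ b - truncatedSecondMoment μ (c * b)) + 2 * m ^ 2) /
          v := by
  set g : ℝ → ℝ := fun y => 2 * (truncate b y ^ 2 - truncate (c * b) y ^ 2) + 2 * m ^ 2
  have hg : Integrable g μ :=
    (((integrable_sq_truncate b).sub (integrable_sq_truncate (c * b))).const_mul 2).add
      (integrable_const _)
  have hg0 : ∀ y, 0 ≤ g y := fun y => by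
    have := sq_truncate_mono (x := y) (mul_le_of_le_one_left hb hc1)
    positivity
  have hfg : ∀ y ∈ {y | s < |(truncate b y - m) / √v|}, (truncate b y - m) ^ 2 ≤ g y := by
    intro y (hy : s < |(truncate b y - m) / √v|)
    rw [abs_div, abs_of_pos (Real.sqrt_pos.mpr hv), lt_div_iff₀
      (Real.sqrt_pos.mpr hv)] at hy
    have hT : c * b < |truncate b y| := by linarith [abs_sub (truncate b y) m]
    have hyb : |y| ≤ b := not_lt.mp fun h => by
      rw [truncate_of_lt_abs h, abs_zero] at hT; nlinarith
    rw [truncate_of_abs_le hyb] at hT ⊢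
    simp only [g, truncate_of_abs_le hyb, truncate_of_lt_abs hT]
    nlinarith [sq_nonneg (y + m)]
  have hf : Integrable (fun y => (truncate b y - m) ^ 2) μ :=
    .of_bound (((measurable_truncate b).sub_const m).pow_const 2).aestronglyMeasurable
      ((|b| + |m|) ^ 2) (ae_of_all _ fun y => by
        rw [Real.norm_eq_abs, abs_pow]
        exact pow_le_pow_left₀ (abs_nonneg _)
          ((abs_sub _ _).trans (add_le_add_left abs_truncate_le _)) 2)
  have hmeas : MeasurableSet {y | s < |(truncate b y - m) / √v|} :=
    measurableSet_lt measurable_const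
      (((measurable_truncate b).sub_const m).div_const _).abs
  calc ∫ y in {y | s < |(truncate b y - m) / √v|}, ((truncate b y - m) / √v) ^ 2 ∂μ
      = (∫ y in {y | s < |(truncate b y - m) / √v|}, (truncate b y - m) ^ 2 ∂μ) / v := by
        simp only [div_pow, Real.sq_sqrt hv.le, integral_div]
    _ ≤ (∫ y, g y ∂μ) / v := by
        gcongr
        exact (setIntegral_mono_on hf.integrableOn hg.integrableOn hmeas hfg).trans
          (setIntegral_le_integral hg (ae_of_all _ hg0))
    _ = _ := by
        simp only [g, truncatedSecondMoment]
        rw [integral_add _ (integrable_const _), integral_const_mul,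
          integral_sub (integrable_sq_truncate b) (integrable_sq_truncate _), integral_const,
          probReal_univ, one_smul]
        exact ((integrable_sq_truncate b).sub (integrable_sq_truncate _)).const_mul 2

theorem tendsto_setIntegral_sq_standardized_truncate
    (hL : SlowlyVarying (truncatedSecondMoment μ)) {b m : ℕ → ℝ} (hb : Tendsto b atTop atTop)
    (hbL : ∀ᶠ n : ℕ in atTop, b n ^ 2 ≤ 4 * n * truncatedSecondMoment μ (b n))
    (hm : Tendsto m atTop (nhds 0)) {η : ℝ} (hη : 0 < η) :
    Tendsto (fun n : ℕ =>
        ∫ y in {y | η * √n < |(truncate (b n) y - m n) /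
            √(truncatedSecondMoment μ (b n) - m n ^ 2)|},
          ((truncate (b n) y - m n) / √(truncatedSecondMoment μ (b n) - m n ^ 2)) ^ 2 ∂μ)
      atTop (nhds 0) := by
  set L := truncatedSecondMoment μ
  set c := min (η / 6) 1
  have hc : 0 < c := lt_min (by positivity) one_pos
  obtain ⟨x₁, hx₁, hLx₁⟩ := ((eventually_ge_atTop 1).and hL.eventually_ne_zero).exists
  replace hLx₁ : 0 < L x₁ := (truncatedSecondMoment_nonneg x₁).lt_of_ne' hLx₁
  have hm2 : Tendsto (fun n => m n ^ 2) atTop (nhds 0) := by simpa using hm.pow 2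
  set B := fun n => 4 * (1 - L (c * b n) / L (b n)) + 4 * m n ^ 2 / L x₁
  have hB : Tendsto B atTop (nhds 0) := by
    simpa using ((((hL c hc).comp hb).const_sub 1).const_mul 4).add
      ((hm2.const_mul 4).div_const (L x₁))
  refine squeeze_zero' (Eventually.of_forall fun n => integral_nonneg fun _ => sq_nonneg _) ?_ hB
  filter_upwards [hbL, hb.eventually_ge_atTop x₁,
    (by simpa using hm.abs : Tendsto (fun n => |m n|) atTop (nhds 0)).eventually
      (eventually_le_nhds (by positivity : 0 < η / 6)),
    hm2.eventually (eventually_le_nhds (half_pos hLx₁))] with n hbn hx hmη hmL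
  have hLb : L x₁ ≤ L (b n) := truncatedSecondMoment_mono hx
  have hLb0 : 0 < L (b n) := hLx₁.trans_le hLb
  have hv : L (b n) / 2 ≤ L (b n) - m n ^ 2 := by linarith
  have hv0 : 0 < L (b n) - m n ^ 2 := by linarith
  have hs : c * b n + |m n| ≤ η * √n * √(L (b n) - m n ^ 2) := by
    have hsqrt : b n / 3 ≤ √n * √(L (b n) - m n ^ 2) := by
      rw [← Real.sqrt_mul n.cast_nonneg, Real.le_sqrt (by linarith) (by positivity)]
      nlinarith [mul_le_mul_of_nonneg_left hv (n.cast_nonneg : (0 : ℝ) ≤ n)]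
    have hcb : c * b n ≤ η / 6 * b n :=
      mul_le_mul_of_nonneg_right (min_le_left _ _) (by linarith)
    nlinarith
  calc _ ≤ (2 * (L (b n) - L (c * b n)) + 2 * m n ^ 2) / (L (b n) - m n ^ 2) :=
        setIntegral_sq_standardized_truncate_le (by linarith) hc.le (min_le_right _ _) hv0 hs
    _ ≤ (2 * (L (b n) - L (c * b n)) + 2 * m n ^ 2) / (L (b n) / 2) := by
        have : L (c * b n) ≤ L (b n) :=
          truncatedSecondMoment_mono (mul_le_of_le_one_left (by linarith) (min_le_right _ _))
        gcongr
    _ = 4 * (1 - L (c * b n) / L (b n)) + 4 * m n ^ 2 / L (b n) := by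
        field_simp
        ring
    _ ≤ B n := by simp only [B]; gcongr

theorem tendsto_setIntegral_sq_standardized_truncate_thresholdSeq
    (hL : SlowlyVarying (truncatedSecondMoment μ)) (hmean : ∫ y, y ∂μ = 0) {b₀ : ℝ}
    (hb₀ : b₀ = sInf {x | 0 < x ∧ 0 < truncatedSecondMoment μ x}) {b m : ℕ → ℝ}
    (hb : b = thresholdSeq (truncatedSecondMoment μ) (b₀ + 1))
    (hm : ∀ n, m n = ∫ y, truncate (b n) y ∂μ) {η : ℝ} (hη : 0 < η) :
    Tendsto (fun n : ℕ =>
        ∫ y in {y | η * √n < |(truncate (b n) y - m n) /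
            √(truncatedSecondMoment μ (b n) - m n ^ 2)|},
          ((truncate (b n) y - m n) / √(truncatedSecondMoment μ (b n) - m n ^ 2)) ^ 2 ∂μ)
      atTop (nhds 0) := by
  have hint : Integrable id μ := integrable_id_of_slowlyVarying hL
  have hb₀0 : 0 ≤ b₀ := hb₀ ▸ Real.sInf_nonneg fun _ hx => hx.1.le
  have hbtop : Tendsto b atTop atTop := hb ▸ tendsto_thresholdSeq_atTop
    truncatedSecondMoment_mono (by linarith) (hL.truncatedSecondMoment_pos (by linarith))
    (thresholdSet_nonempty hint _)
  have hbL : ∀ᶠ n : ℕ in atTop, b n ^ 2 ≤ 4 * n * truncatedSecondMoment μ (b n) :=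
    (hbtop.eventually_ge_atTop (2 * (b₀ + 1))).mono fun n hn => by
      subst hb
      exact (thresholdSeq_sq_lt truncatedSecondMoment_mono (by linarith) hn).le
  have hmlim : Tendsto m atTop (nhds 0) := by
    simpa only [← hm, hmean] using tendsto_integral_truncate hint hbtop
  exact tendsto_setIntegral_sq_standardized_truncate hL hbtop hbL hmlim hη

end Lindeberg

theorem lindeberg_condition_truncated_general
    {Ω : Type*} [MeasureSpace Ω] [IsProbabilityMeasure (ℙ : Measure Ω)]
    (X : Ω → ℝ) (hX : AEMeasurable X ℙ)
    (hmean : ∫ ω, X ω ∂ℙ = 0)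
    (l : ℝ → ℝ)
    (hl : ∀ x : ℝ, l x = ∫ ω in {ω | |X ω| ≤ x}, |X ω| ^ 2 ∂ℙ)
    (hslow : ∀ c : ℝ, 0 < c → Tendsto (fun x => l (c * x) / l x) atTop (nhds 1))
    (b₀ : ℝ) (hb₀ : b₀ = sInf {x : ℝ | 0 < x ∧ 0 < l x})
    (b : ℕ → ℝ)
    (hb : ∀ n, b n = sInf {x : ℝ | b₀ + 1 ≤ x ∧ n * l x ≤ x ^ 2})
    (T : ℕ → Ω → ℝ)
    (hT : ∀ n ω, T n ω = if |X ω| ≤ b n then X ω else 0)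
    (m : ℕ → ℝ) (hm : ∀ n, m n = ∫ ω, T n ω ∂ℙ)
    (v : ℕ → ℝ) (hv : ∀ n, v n = (∫ ω, (T n ω) ^ 2 ∂ℙ) - (m n) ^ 2)
    (Y : ℕ → Ω → ℝ)
    (hY : ∀ n ω, Y n ω = (T n ω - m n) / Real.sqrt (v n)) :
    ∀ η : ℝ, 0 < η →
      Tendsto (fun n : ℕ =>
          ∫ ω in {ω | η * Real.sqrt n < |Y n ω|}, (Y n ω) ^ 2 ∂ℙ)
        atTop (nhds 0) := by
  intro η hη
  set μ := (ℙ : Measure Ω).map X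
  have : IsProbabilityMeasure μ := Measure.isProbabilityMeasure_map hX
  have hmap (g : ℝ → ℝ) (hg : Measurable g) : ∫ y, g y ∂μ = ∫ ω, g (X ω) ∂ℙ :=
    integral_map hX hg.aestronglyMeasurable
  obtain rfl : l = truncatedSecondMoment μ :=
    funext fun x => (hl x).trans (truncatedSecondMoment_map hX x).symm
  have hm' : ∀ n, m n = ∫ y, truncate (b n) y ∂μ := fun n => by
    rw [hm, hmap _ (measurable_truncate _)]; simp_rw [hT]; rfl
  have hv' : ∀ n, v n = truncatedSecondMoment μ (b n) - m n ^ 2 := fun n => by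
    rw [hv, truncatedSecondMoment, hmap _ ((measurable_truncate _).pow_const 2)]; simp_rw [hT]; rfl
  refine (tendsto_setIntegral_sq_standardized_truncate_thresholdSeq hslow
    ((hmap id measurable_id).trans hmean) hb₀ (funext hb) hm' hη).congr fun n => ?_
  simp only [← hv', hY, hT]
  exact setIntegral_map (measurableSet_lt measurable_const (by fun_prop)) (by fun_prop) hX

/-- Lindeberg condition for the truncated and standardized variables
`Y_n = [Var(X 1_{|X| ≤ b_n})]^{-1/2}(X 1_{|X| ≤ b_n} − E[X 1_{|X| ≤ b_n}])`:
for every `η > 0`, `E[|Y_n|² 1_{|Y_n| > η √n}] → 0`. -/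
theorem lindeberg_condition_truncated
    {Ω : Type*} [MeasureSpace Ω] [IsProbabilityMeasure (ℙ : Measure Ω)]
    (X : Ω → ℝ) (hX : AEMeasurable X ℙ)
    (hmean : ∫ ω, X ω ∂ℙ = 0)
    (l : ℝ → ℝ)
    (hl : ∀ x : ℝ, l x = ∫ ω in {ω | |X ω| ≤ x}, |X ω| ^ 2 ∂ℙ)
    (hslow : ∀ c : ℝ, 0 < c → Tendsto (fun x => l (c * x) / l x) atTop (nhds 1))
    (hinf : ¬ Integrable (fun ω => |X ω| ^ 2) ℙ)
    (b₀ : ℝ) (hb₀ : b₀ = sInf {x : ℝ | 0 < x ∧ 0 < l x})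
    (b : ℕ → ℝ)
    (hb : ∀ n, b n = sInf {x : ℝ | b₀ + 1 ≤ x ∧ n * l x ≤ x ^ 2})
    (T : ℕ → Ω → ℝ)
    (hT : ∀ n ω, T n ω = if |X ω| ≤ b n then X ω else 0)
    (m : ℕ → ℝ) (hm : ∀ n, m n = ∫ ω, T n ω ∂ℙ)
    (v : ℕ → ℝ) (hv : ∀ n, v n = (∫ ω, (T n ω) ^ 2 ∂ℙ) - (m n) ^ 2)
    (Y : ℕ → Ω → ℝ)
    (hY : ∀ n ω, Y n ω = (T n ω - m n) / Real.sqrt (v n)) :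
    ∀ η : ℝ, 0 < η →
      Tendsto (fun n : ℕ =>
          ∫ ω in {ω | η * Real.sqrt n < |Y n ω|}, (Y n ω) ^ 2 ∂ℙ)
        atTop (nhds 0) :=
  lindeberg_condition_truncated_general X hX hmean l hl hslow b₀ hb₀ b hb T hT m hm v hv Y hY
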